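/- Assume (n−1)/2 is an odd positive integer, ω₀ is an odd integer with ω₀ ≤ −(n−1)/2, σ ∈ ℝ, γ̃ = (n−1)/2, and μ : (−r₀', r₀') → ℝ is a smooth even function (some 0 < r₀' ≤ −r₀) with μ(0) = 0 and μ(r) = μ̃(log(−r)) for −r₀' < r < 0. Then there exist ε > 0 and a smooth even function g : (−ε, ε) → ℝ such that g(r) = G(r) for all r ∈ (−ε, 0). (This expresses that the joint branes N ∪ N̂, obtained by reflecting the brane across the black-hole/white-hole singularity r = 0, form a C^∞ hypersurface in ℝ² × S₀.) -/
import Mathlib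
set_option maxHeartbeats 1000000



/-- **Smooth transition through the singularity, case `γ = (n-1)/2`.**
If `(n-1)/2` is an odd positive integer, `ω₀` is an odd integer with `ω₀ ≤ -(n-1)/2`,
`σ ∈ ℝ`, `γ = (n-1)/2`, and `μ` is a smooth even extension of `μ̃(log(-r))`, then
`G = dt/dr` extends to a smooth even function near `r = 0`, i.e. the joint branes
`N ∪ N̂` form a `C^∞` hypersurface in `ℝ² × S₀`. -/
theorem smooth_transition_critical
    (n : ℕ) (hn : 3 ≤ n)
    (m Λ κt κ σ ω₀ ρ₀ γ r₀ : ℝ)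
    (hm : 0 < m) (hΛ : Λ ≤ 0)
    (hκt : κt = -1 ∨ κt = 0 ∨ κt = 1) (hΛκt : Λ = 0 → κt = 1)
    (hκ : κ ≠ 0) (hρ₀ : 0 < ρ₀) (hγ0 : 0 < γ) (hr₀ : r₀ < 0)
    (lam μt : ℝ → ℝ)
    (hlam : ContDiff ℝ (⊤ : ℕ∞) lam)
    (hlam0 : Filter.Tendsto lam Filter.atBot (nhds 0))
    (hμt : ∀ t : ℝ, HasDerivAt μt (lam t) t)
    (hμt0 : Filter.Tendsto μt Filter.atBot (nhds 0))
    (θ Φ G : ℝ → ℝ)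
    (hθ : ∀ r < (0:ℝ), θ r
      = m + 2 * Λ / ((n : ℝ) * ((n : ℝ) + 1)) * (-r) ^ ((n : ℝ) + 1)
        - κt * (-r) ^ ((n : ℝ) - 1))
    (hΦ : ∀ r < (0:ℝ), Φ r
      = m * (-r) ^ (2 * γ - ((n : ℝ) - 1))
        + 2 * Λ / ((n : ℝ) * ((n : ℝ) + 1)) * (-r) ^ (2 * γ + 2)
        - κt * (-r) ^ (2 * γ)
        + κ ^ 2 / (n : ℝ) ^ 2
          * (ρ₀ ^ 2 * (-r) ^ (2 * (γ + 1 - ((n : ℝ) + ω₀)))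
               * Real.exp (-2 * μt (Real.log (-r)))
             + 2 * σ * ρ₀ * (-r) ^ (2 * γ + 2 - ((n : ℝ) + ω₀))
               * Real.exp (-μt (Real.log (-r)))
             + σ ^ 2 * (-r) ^ (2 * γ + 2)))
    (hG : ∀ r < (0:ℝ), G r
      = -(κ / (n : ℝ))
          * (σ * (-r) ^ ((n : ℝ) + γ)
             + ρ₀ * (-r) ^ (γ - ω₀) * Real.exp (-μt (Real.log (-r))))
          / (θ r * Real.sqrt (Φ r)))
    (r₀' : ℝ) (hr₀'0 : 0 < r₀') (hr₀' : r₀' ≤ -r₀)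
    (μ : ℝ → ℝ)
    (hμs : ContDiffOn ℝ (⊤ : ℕ∞) μ (Set.Ioo (-r₀') r₀'))
    (hμeven : ∀ r ∈ Set.Ioo (-r₀') r₀', μ (-r) = μ r)
    (hμ0 : μ 0 = 0)
    (hμeq : ∀ r : ℝ, -r₀' < r → r < 0 → μ r = μt (Real.log (-r)))
    (hhalf : ∃ j : ℕ, Odd j ∧ 0 < j ∧ ((n : ℝ) - 1) / 2 = (j : ℝ))
    (hω₀odd : ∃ z : ℤ, Odd z ∧ ω₀ = (z : ℝ))
    (hω₀le : ω₀ ≤ -((n : ℝ) - 1) / 2)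
    (hγ : γ = ((n : ℝ) - 1) / 2) :
    ∃ ε : ℝ, 0 < ε ∧ ∃ g : ℝ → ℝ,
      ContDiffOn ℝ (⊤ : ℕ∞) g (Set.Ioo (-ε) ε)
      ∧ (∀ r ∈ Set.Ioo (-ε) ε, g (-r) = g r)
      ∧ ∀ r : ℝ, -ε < r → r < 0 → g r = G r := by

  classical
  obtain ⟨j, hjodd, hjpos, hj⟩ := hhalf
  obtain ⟨z, hzodd, hzeq⟩ := hω₀odd
  have hn2 : (n:ℝ) = 2*(j:ℝ)+1 := by linarith
  have hγj : γ = (j:ℝ) := by rw [hγ, hj]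
  have hwle : ω₀ ≤ -(j:ℝ) := by
    have h' : -((n:ℝ)-1)/2 = -(j:ℝ) := by rw [← hj]; ring
    linarith [h' ▸ hω₀le]
  have hj1 : 1 ≤ (j:ℤ) := by exact_mod_cast hjpos
  have hzj : z ≤ -(j:ℤ) := by exact_mod_cast hzeq ▸ hwle
  set w : ℕ := (-z).toNat with hwdef
  have hzw : (w:ℤ) = -z := Int.toNat_of_nonneg (by omega)
  have hwodd : Odd w := by
    have h' : Odd ((w:ℤ)) := hzw ▸ hzodd.neg
    exact (Int.odd_coe_nat w).mp h'
  have hjw : j ≤ w := by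
    have h' : (j:ℤ) ≤ (w:ℤ) := by omega
    exact_mod_cast h'
  have hω₀w : ω₀ = -(w:ℝ) := by
    rw [hzeq]
    have h' : z = -(w:ℤ) := by omega
    rw [h']; push_cast; ring
  obtain ⟨k, hk⟩ := id hjodd
  have heA : Even (2*j+2) := ⟨j+1, by ring⟩
  have heB : Even (2*j) := ⟨j, by ring⟩
  have heP : Even (2*(w-j)) := ⟨w-j, by ring⟩
  have heQ : Even (w+1) := hwodd.add_one
  have hea : Even (3*j+1) := ⟨3*k+2, by omega⟩
  have heb : Even (j+w) := hjodd.add_odd hwodd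
  set θe : ℝ → ℝ := fun r => m + 2 * Λ / ((n : ℝ) * ((n : ℝ) + 1)) * r ^ (2*j+2)
      - κt * r ^ (2*j) with hθedef
  set Φe : ℝ → ℝ := fun r => m + 2 * Λ / ((n : ℝ) * ((n : ℝ) + 1)) * r ^ (2*j+2)
      - κt * r ^ (2*j)
      + κ ^ 2 / (n : ℝ) ^ 2
        * (ρ₀ ^ 2 * r ^ (2*(w-j)) * Real.exp (-2 * μ r)
           + 2 * σ * ρ₀ * r ^ (w+1) * Real.exp (-μ r)
           + σ ^ 2 * r ^ (2*j+2)) with hΦedef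
  set g : ℝ → ℝ := fun r => -(κ / (n : ℝ))
      * (σ * r ^ (3*j+1) + ρ₀ * r ^ (j+w) * Real.exp (-μ r))
      / (θe r * Real.sqrt (Φe r)) with hgdef
  have h0mem : (0:ℝ) ∈ Set.Ioo (-r₀') r₀' := ⟨by linarith, hr₀'0⟩
  have hμc0 : ContinuousAt μ 0 := (hμs.contDiffAt (isOpen_Ioo.mem_nhds h0mem)).continuousAt
  have hθe0 : θe 0 = m := by
    simp only [hθedef]
    rw [zero_pow (by omega : 2*j+2 ≠ 0), zero_pow (by omega : 2*j ≠ 0)]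
    ring
  have hΦe0 : 0 < Φe 0 := by
    have h2 : ((0:ℝ)) ^ (2*j+2) = 0 := zero_pow (by omega)
    have h3 : ((0:ℝ)) ^ (2*j) = 0 := zero_pow (by omega)
    have h4 : ((0:ℝ)) ^ (w+1) = 0 := zero_pow (by omega)
    have h1 : (0:ℝ) ≤ κ ^ 2 / (n : ℝ) ^ 2
        * (ρ₀ ^ 2 * (0:ℝ) ^ (2*(w-j)) * Real.exp (-2 * μ 0)
           + 2 * σ * ρ₀ * (0:ℝ) ^ (w+1) * Real.exp (-μ 0)
           + σ ^ 2 * (0:ℝ) ^ (2*j+2)) := by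
      rw [h4, h2]
      have h5 : (0:ℝ) ≤ ρ₀ ^ 2 * (0:ℝ) ^ (2*(w-j)) * Real.exp (-2 * μ 0) := by positivity
      have h6 : (0:ℝ) ≤ κ ^ 2 / (n : ℝ) ^ 2 := by positivity
      nlinarith [h5, h6]
    simp only [hΦedef]
    rw [h2, h3, h4]
    rw [h2, h4] at h1
    linarith [h1]
  have hθec : ContinuousAt θe 0 := by rw [hθedef]; fun_prop
  have hΦec : ContinuousAt Φe 0 := by rw [hΦedef]; fun_prop
  have hev : ∀ᶠ r in nhds (0:ℝ), r ∈ Set.Ioo (-r₀') r₀' ∧ 0 < Φe r ∧ θe r ≠ 0 := by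
    have e1 : ∀ᶠ r in nhds (0:ℝ), r ∈ Set.Ioo (-r₀') r₀' := isOpen_Ioo.mem_nhds h0mem
    have e2 : ∀ᶠ r in nhds (0:ℝ), 0 < Φe r :=
      (hΦec.eventually_mem (isOpen_Ioi.mem_nhds (Set.mem_Ioi.mpr hΦe0))).mono fun x hx => hx
    have e3 : ∀ᶠ r in nhds (0:ℝ), θe r ≠ 0 :=
      hθec.eventually_ne (by rw [hθe0]; exact ne_of_gt hm)
    exact e1.and (e2.and e3)
  obtain ⟨ε, hε0, hball⟩ := Metric.eventually_nhds_iff.mp hev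
  have hmem : ∀ x ∈ Set.Ioo (-ε) ε, x ∈ Set.Ioo (-r₀') r₀' ∧ 0 < Φe x ∧ θe x ≠ 0 := by
    intro x hx
    exact hball (by rw [Real.dist_eq, sub_zero]; exact abs_lt.mpr ⟨hx.1, hx.2⟩)
  refine ⟨ε, hε0, g, ?_, ?_, ?_⟩
  · -- smoothness
    have hμε : ContDiffOn ℝ (⊤:ℕ∞) μ (Set.Ioo (-ε) ε) :=
      hμs.mono (fun x hx => (hmem x hx).1)
    have hexp1 : ContDiffOn ℝ (⊤:ℕ∞) (fun r => Real.exp (-μ r)) (Set.Ioo (-ε) ε) :=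
      hμε.neg.exp
    have hexp2 : ContDiffOn ℝ (⊤:ℕ∞) (fun r => Real.exp (-2 * μ r)) (Set.Ioo (-ε) ε) :=
      (contDiffOn_const.mul hμε).exp
    have hpw : ∀ q : ℕ, ContDiffOn ℝ (⊤:ℕ∞) (fun r : ℝ => r ^ q) (Set.Ioo (-ε) ε) :=
      fun q => (contDiff_id.pow q).contDiffOn
    have hΦes : ContDiffOn ℝ (⊤:ℕ∞) Φe (Set.Ioo (-ε) ε) := by
      rw [hΦedef]
      exact ((contDiffOn_const.add (contDiffOn_const.mul (hpw _))).sub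
        (contDiffOn_const.mul (hpw _))).add
        (contDiffOn_const.mul
          ((((contDiffOn_const.mul (hpw _)).mul hexp2).add
            ((contDiffOn_const.mul (hpw _)).mul hexp1)).add
            (contDiffOn_const.mul (hpw _))))
    have hθes : ContDiffOn ℝ (⊤:ℕ∞) θe (Set.Ioo (-ε) ε) := by
      rw [hθedef]
      exact (contDiffOn_const.add (contDiffOn_const.mul (hpw _))).sub
        (contDiffOn_const.mul (hpw _))
    have hsq : ContDiffOn ℝ (⊤:ℕ∞) (fun r => Real.sqrt (Φe r)) (Set.Ioo (-ε) ε) := by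
      intro x hx
      exact ((hΦes.contDiffAt (isOpen_Ioo.mem_nhds hx)).sqrt
        (ne_of_gt (hmem x hx).2.1)).contDiffWithinAt
    rw [hgdef]
    refine ContDiffOn.div ?_ (hθes.mul hsq) ?_
    · exact contDiffOn_const.mul
        ((contDiffOn_const.mul (hpw _)).add ((contDiffOn_const.mul (hpw _)).mul hexp1))
    · intro x hx
      exact mul_ne_zero (hmem x hx).2.2 (Real.sqrt_ne_zero'.mpr (hmem x hx).2.1)
  · -- evenness
    intro r hr
    have hμr : μ (-r) = μ r := hμeven r (hmem r hr).1
    simp only [hgdef, hθedef, hΦedef, hμr, heA.neg_pow, heB.neg_pow, heP.neg_pow,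
      heQ.neg_pow, hea.neg_pow, heb.neg_pow]
  · -- equality with G on the negative side
    intro r hrε hr0
    have hrIoo : r ∈ Set.Ioo (-ε) ε := ⟨hrε, lt_trans hr0 hε0⟩
    have hmemr := hmem r hrIoo
    have hμeqr : μt (Real.log (-r)) = μ r := (hμeq r hmemr.1.1 hr0).symm
    have key : ∀ (q : ℕ), Even q → ∀ x : ℝ, x = (q:ℝ) → (-r) ^ x = r ^ q := by
      intro q hq x hx
      rw [hx, Real.rpow_natCast, hq.neg_pow]
    have c1 : (-r) ^ ((n:ℝ)+1) = r ^ (2*j+2) :=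
      key _ heA _ (by push_cast; linarith)
    have c2 : (-r) ^ ((n:ℝ)-1) = r ^ (2*j) :=
      key _ heB _ (by push_cast; linarith)
    have c0 : (-r) ^ (2*γ - ((n:ℝ)-1)) = 1 := by
      rw [show 2*γ - ((n:ℝ)-1) = (0:ℝ) by rw [hγj]; linarith, Real.rpow_zero]
    have c3 : (-r) ^ (2*γ+2) = r ^ (2*j+2) :=
      key _ heA _ (by rw [hγj]; push_cast; ring)
    have c4 : (-r) ^ (2*γ) = r ^ (2*j) :=
      key _ heB _ (by rw [hγj]; push_cast; ring)
    have c5 : (-r) ^ (2*(γ+1-((n:ℝ)+ω₀))) = r ^ (2*(w-j)) :=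
      key _ heP _ (by rw [hγj, hω₀w]; push_cast [Nat.cast_sub hjw]; linarith)
    have c6 : (-r) ^ (2*γ+2-((n:ℝ)+ω₀)) = r ^ (w+1) :=
      key _ heQ _ (by rw [hγj, hω₀w]; push_cast; linarith)
    have ca : (-r) ^ ((n:ℝ)+γ) = r ^ (3*j+1) :=
      key _ hea _ (by rw [hγj]; push_cast; linarith)
    have cb : (-r) ^ (γ-ω₀) = r ^ (j+w) :=
      key _ heb _ (by rw [hγj, hω₀w]; push_cast; ring)
    have hθeq : θ r = θe r := by
      rw [hθ r hr0, c1, c2, hθedef]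
    have hΦeq : Φ r = Φe r := by
      rw [hΦ r hr0, c0, c3, c4, c5, c6, hμeqr, hΦedef]
      ring
    rw [hG r hr0, hθeq, hΦeq, hμeqr, ca, cb, hgdef]
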